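/- arXiv:1711.04397 — 2 statements merged into one kernel-verified Lean document; each statement's English description precedes it below -/
import Mathlib

section
/- Let ζ be a nonzero real number, Q the supercharge with parameter ζ, λ a nonzero complex number, and let (A_L)_{L≥1} be a family of linear operators A_L : V^L → V^L satisfying A_{L+1} Q = λ Q A_L for all L. Let L ≥ 2 and let Ψ ∈ W^L satisfy QΨ = 0 and Q†Ψ = 0, and suppose Ψ = Φ + Qα with QΦ = 0 and α ∈ W^{L−1}, and Ψ = Φ' + Q†β with Q†Φ' = 0 and β ∈ W^{L+1}. Then ⟨Ψ | A_L Ψ⟩ = ⟨Φ' | A_L Φ⟩. -/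
open scoped BigOperators

noncomputable section

namespace EightVertex

/-- Spin configurations of a chain of length `L`: `0` is spin up, `1` is spin down. -/
abbrev Cfg (L : ℕ) := Fin L → Fin 2

/-- The Hilbert space `V^L = (ℂ²)^{⊗L}`, with its canonical orthonormal basis indexed
by spin configurations and the standard Hermitian inner product (conjugate-linear in
the first argument). -/
abbrev V (L : ℕ) := EuclideanSpace ℂ (Cfg L)

/-- The canonical basis state `|s₁ ⋯ s_L⟩`. -/
def bs {L : ℕ} (s : Cfg L) : V L := EuclideanSpace.single s 1

/-- The all-spins-up basis state `|↑⋯↑⟩`. -/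
def allUp (L : ℕ) : V L := bs (fun _ => 0)

/-- Cyclic successor on `Fin L`. -/
def cyc {L : ℕ} (j : Fin L) : Fin L := ⟨((j : ℕ) + 1) % L, Nat.mod_lt _ j.pos⟩

/-- Matrix of the translation operator `S`: `S|s₁⋯s_L⟩ = |s_L s₁ ⋯ s_{L-1}⟩`. -/
def Smat (L : ℕ) : Matrix (Cfg L) (Cfg L) ℂ :=
  fun s' s => if (∀ j, s' (cyc j) = s j) then 1 else 0

/-- The translation operator `S` on `V^L`. -/
def Sop (L : ℕ) : V L →ₗ[ℂ] V L := Matrix.toEuclideanLin (Smat L)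

/-- The subspace `W^L ⊆ V^L` of alternate-cyclic states: the eigenspace of the
translation operator with eigenvalue `(-1)^{L+1}`. -/
def W (L : ℕ) : Submodule ℂ (V L) :=
  Module.End.eigenspace (Sop L : Module.End ℂ (V L)) ((-1 : ℂ) ^ (L + 1))

def sigmaX : Matrix (Fin 2) (Fin 2) ℂ := !![0, 1; 1, 0]
def sigmaY : Matrix (Fin 2) (Fin 2) ℂ := !![0, -Complex.I; Complex.I, 0]
def sigmaZ : Matrix (Fin 2) (Fin 2) ℂ := !![1, 0; 0, -1]

/-- The one-site operator `A_j` acting on site `j` of the chain. -/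
def site {L : ℕ} (A : Matrix (Fin 2) (Fin 2) ℂ) (j : Fin L) : Matrix (Cfg L) (Cfg L) ℂ :=
  fun s' s => A (s' j) (s j) * ∏ k ∈ Finset.univ.erase j, (if s' k = s k then (1 : ℂ) else 0)

/-- Matrix of the periodic XYZ Hamiltonian
`H = -(1/2) ∑_j (Jx σ^x_j σ^x_{j+1} + Jy σ^y_j σ^y_{j+1} + Jz σ^z_j σ^z_{j+1})`. -/
def HxyzMat (Jx Jy Jz : ℝ) (L : ℕ) : Matrix (Cfg L) (Cfg L) ℂ :=
  (-(1/2) : ℂ) • ∑ j : Fin L,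
    ((Jx : ℂ) • (site sigmaX j * site sigmaX (cyc j)) +
     (Jy : ℂ) • (site sigmaY j * site sigmaY (cyc j)) +
     (Jz : ℂ) • (site sigmaZ j * site sigmaZ (cyc j)))

/-- The periodic XYZ Hamiltonian on `V^L`. -/
def Hxyz (Jx Jy Jz : ℝ) (L : ℕ) : V L →ₗ[ℂ] V L := Matrix.toEuclideanLin (HxyzMat Jx Jy Jz L)

/-- The XYZ Hamiltonian with the supersymmetric anisotropy parameters
`Jx = 1+ζ`, `Jy = 1-ζ`, `Jz = (ζ²-1)/2`. -/
def HxyzSusy (ζ : ℝ) (L : ℕ) : V L →ₗ[ℂ] V L :=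
  Hxyz (1 + ζ) (1 - ζ) ((ζ ^ 2 - 1) / 2) L

/-- The ground-state energy `E₀ = -(2n+1)(3+ζ²)/4`. -/
def E0 (n : ℕ) (ζ : ℝ) : ℝ := -(2 * (n : ℝ) + 1) * (3 + ζ ^ 2) / 4

/-- Matrix of the spin-parity operator `P = (-1)^L σ^z_1 ⋯ σ^z_L`. -/
def Pmat (L : ℕ) : Matrix (Cfg L) (Cfg L) ℂ :=
  fun s' s => if s' = s then (-1 : ℂ) ^ L * ∏ j, (if s j = 0 then (1 : ℂ) else -1) else 0

/-- The spin-parity operator `P` on `V^L`. -/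
def Pop (L : ℕ) : V L →ₗ[ℂ] V L := Matrix.toEuclideanLin (Pmat L)

/-- Spin flip on a single site. -/
def flip : Fin 2 → Fin 2 := fun x => if x = 0 then 1 else 0

/-- Matrix of the spin-reversal operator `R = σ^x_1 ⋯ σ^x_L`. -/
def Rrevmat (L : ℕ) : Matrix (Cfg L) (Cfg L) ℂ :=
  fun s' s => if (∀ j, s' j = flip (s j)) then 1 else 0

/-- The spin-reversal operator `R` on `V^L`. -/
def Rrev (L : ℕ) : V L →ₗ[ℂ] V L := Matrix.toEuclideanLin (Rrevmat L)

/-- Entries of the eight-vertex `R`-matrix with weights `a,b,c,d`.  In each pair the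
first component is the auxiliary-space index, the second one the physical index;
the first argument is the outgoing pair, the second the incoming pair.  In the
ordered basis `↑↑, ↑↓, ↓↑, ↓↓` its rows are `(a,0,0,d), (0,b,c,0), (0,c,b,0), (d,0,0,a)`. -/
def Rv (a b c d : ℂ) : Fin 2 × Fin 2 → Fin 2 × Fin 2 → ℂ := fun o i =>
  if o = i then (if o.1 = o.2 then a else b)
  else if o.1 = i.2 ∧ o.2 = i.1 ∧ i.1 ≠ i.2 then c
  else if o.1 = o.2 ∧ i.1 = i.2 ∧ o.1 ≠ i.1 then d
  else 0

/-- Matrix of the transfer matrix `T = tr₀(R₀L ⋯ R₀1)` of the eight-vertex model. -/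
def Tmat (a b c d : ℂ) (L : ℕ) : Matrix (Cfg L) (Cfg L) ℂ :=
  fun s' s => ∑ t : Cfg L, ∏ j : Fin L, Rv a b c d (t (cyc j), s' j) (t j, s j)

/-- The transfer matrix `T` of the eight-vertex model on `V^L`. -/
def Top (a b c d : ℂ) (L : ℕ) : V L →ₗ[ℂ] V L := Matrix.toEuclideanLin (Tmat a b c d L)

/-- Entries of the local supercharge `q(ζ) : ℂ² → ℂ² ⊗ ℂ²`, `q|↑⟩ = 0`,
`q|↓⟩ = |↑↑⟩ - ζ|↓↓⟩`; arguments: incoming spin, the two outgoing spins. -/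
def qloc (ζ : ℂ) (si o1 o2 : Fin 2) : ℂ :=
  if si = 1 then
    (if o1 = 0 ∧ o2 = 0 then 1 else if o1 = 1 ∧ o2 = 1 then -ζ else 0)
  else 0

/-- Position of site `k` of the original chain after insertion of one site at `j`. -/
def insIdx {L : ℕ} (j k : Fin L) : Fin (L + 1) :=
  if (k : ℕ) < (j : ℕ) then k.castSucc else k.succ

/-- Matrix of the local supercharge `q_j : V^L → V^{L+1}` acting on the `j`-th site
(`j : Fin L` corresponds to the paper's `j+1 ∈ {1,…,L}`). -/
def qjMat (ζ : ℂ) {L : ℕ} (j : Fin L) : Matrix (Cfg (L + 1)) (Cfg L) ℂ :=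
  fun s' s => qloc ζ (s j) (s' j.castSucc) (s' j.succ) *
    ∏ k ∈ Finset.univ.erase j, (if s' (insIdx j k) = s k then (1 : ℂ) else 0)

/-- Matrix of `∑_{j=0}^{L} (-1)^j q_j`, where `q_0 = S q_L`. -/
def QsumMat (ζ : ℂ) : (L : ℕ) → Matrix (Cfg (L + 1)) (Cfg L) ℂ
  | 0 => 0
  | (M + 1) =>
      Smat (M + 2) * qjMat ζ (Fin.last M) +
      ∑ j : Fin (M + 1), ((-1 : ℂ) ^ ((j : ℕ) + 1)) • qjMat ζ j

/-- The supercharge `Q(ζ) : V^L → V^{L+1}`: it acts as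
`√(L/(L+1)) ∑_{j=0}^L (-1)^j q_j` on the alternate-cyclic subspace `W^L` and as zero
on the other eigenspaces of the translation operator (equivalently, on the orthogonal
complement of `W^L`, since `S` is unitary). -/
def Qsc (ζ : ℝ) (L : ℕ) : V L →ₗ[ℂ] V (L + 1) :=
  (Real.sqrt ((L : ℝ) / ((L : ℝ) + 1)) : ℂ) •
    ((Matrix.toEuclideanLin (QsumMat (ζ : ℂ) L)) ∘ₗ
      ((W L).subtype ∘ₗ (W L).orthogonalProjectionOnto.toLinearMap))

/-- The adjoint supercharge `Q(ζ)† : V^L → V^{L-1}`. -/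
def Qadj (ζ : ℝ) : (L : ℕ) → (V L →ₗ[ℂ] V (L - 1))
  | 0 => 0
  | (K + 1) => LinearMap.adjoint (Qsc ζ K)

/-- Number of down spins of a configuration. -/
def nDown {L : ℕ} (s : Cfg L) : ℕ := (Finset.univ.filter fun j => s j = 1).card

/-- The state `Φ_n(ζ) = ∑_{m=0}^{n} ζ^m ∑_{x₁<⋯<x_{2m+1}} ||x₁,…,x_{2m+1}⟩⟩`. -/
def Phi (ζ : ℝ) (n : ℕ) : V (2 * n + 1) :=
  ∑ s : Cfg (2 * n + 1),
    (if nDown s % 2 = 1 then ((ζ : ℂ) ^ (nDown s / 2)) else 0) • bs s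

/-- The state `Φ̄_n(ζ) = ∑_{m=0}^{n} ζ^m ∑_{x₁<⋯<x_{2m}} ||x₁,…,x_{2m}⟩⟩`. -/
def PhiBar (ζ : ℝ) (n : ℕ) : V (2 * n + 1) :=
  ∑ s : Cfg (2 * n + 1),
    (if nDown s % 2 = 0 then ((ζ : ℂ) ^ (nDown s / 2)) else 0) • bs s

end EightVertex

section Intertwining

open LinearMap

theorem map_mem_ker_of_comp_eq_smul_comp {K M N : Type*} [Field K]
    [AddCommGroup M] [Module K M] [AddCommGroup N] [Module K N]
    {Q : M →ₗ[K] N} {A : M →ₗ[K] M} {A' : N →ₗ[K] N} {c : K}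
    (hA : A' ∘ₗ Q = c • (Q ∘ₗ A)) (hc : c ≠ 0) {x : M} (hx : x ∈ ker Q) :
    A x ∈ ker Q := by
  have h : c • Q (A x) = 0 := by
    rw [← comp_apply Q A, ← LinearMap.smul_apply, ← hA, comp_apply, mem_ker.mp hx, map_zero]
  exact mem_ker.mpr ((smul_eq_zero.mp h).resolve_left hc)

variable {𝕜 E₀ E₁ E₂ : Type*} [RCLike 𝕜]
  [NormedAddCommGroup E₀] [InnerProductSpace 𝕜 E₀] [FiniteDimensional 𝕜 E₀]
  [NormedAddCommGroup E₁] [InnerProductSpace 𝕜 E₁] [FiniteDimensional 𝕜 E₁]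
  [NormedAddCommGroup E₂] [InnerProductSpace 𝕜 E₂] [FiniteDimensional 𝕜 E₂]

theorem inner_apply_eq_inner_of_decompositions {Q₀ : E₀ →ₗ[𝕜] E₁} {Q₁ : E₁ →ₗ[𝕜] E₂}
    {A₀ : E₀ →ₗ[𝕜] E₀} {A₁ : E₁ →ₗ[𝕜] E₁} {A₂ : E₂ →ₗ[𝕜] E₂} {c : 𝕜}
    (hA₁ : A₁ ∘ₗ Q₀ = c • (Q₀ ∘ₗ A₀)) (hA₂ : A₂ ∘ₗ Q₁ = c • (Q₁ ∘ₗ A₁)) (hc : c ≠ 0)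
    {Ψ Φ Φ' : E₁} {α : E₀} {β : E₂} (hΨ : adjoint Q₀ Ψ = 0) (hΦ : Q₁ Φ = 0)
    (hdec : Ψ = Φ + Q₀ α) (hdec' : Ψ - Φ' = adjoint Q₁ β) :
    inner 𝕜 Ψ (A₁ Ψ) = inner 𝕜 Φ' (A₁ Φ) := by
  have hα : inner 𝕜 Ψ (A₁ (Q₀ α)) = 0 := by
    rw [← comp_apply, hA₁, LinearMap.smul_apply, inner_smul_right, comp_apply,
      ← adjoint_inner_left, hΨ, inner_zero_left, mul_zero]
  have hβ : inner 𝕜 (adjoint Q₁ β) (A₁ Φ) = 0 := by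
    rw [adjoint_inner_left, map_mem_ker_of_comp_eq_smul_comp hA₂ hc hΦ, inner_zero_right]
  calc inner 𝕜 Ψ (A₁ Ψ)
      = inner 𝕜 Ψ (A₁ Φ) := by rw [hdec, map_add, inner_add_right, ← hdec, hα, add_zero]
    _ = inner 𝕜 Φ' (A₁ Φ) + inner 𝕜 (Ψ - Φ') (A₁ Φ) := by rw [inner_sub_left]; ring
    _ = inner 𝕜 Φ' (A₁ Φ) := by rw [hdec', hβ, add_zero]

end Intertwining

namespace EightVertex

theorem statement6_general (ζ : ℝ) (lam : ℂ) (hlam : lam ≠ 0)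
    (A : (L : ℕ) → (V L →ₗ[ℂ] V L))
    (hA : ∀ L : ℕ, A (L + 1) ∘ₗ Qsc ζ L = lam • (Qsc ζ L ∘ₗ A L))
    (K : ℕ)
    (Ψ Φ Φ' : V (K + 1)) (α : V K) (β : V (K + 2))
    (hQdΨ : Qadj ζ (K + 1) Ψ = 0)
    (hΦ : Qsc ζ (K + 1) Φ = 0)
    (hdec : Ψ = Φ + Qsc ζ K α)
    (hdec' : Ψ - Φ' = Qadj ζ (K + 2) β) :
    (inner ℂ Ψ (A (K + 1) Ψ) : ℂ) = inner ℂ Φ' (A (K + 1) Φ) :=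
  -- `Qadj ζ (L + 1)` is definitionally `adjoint (Qsc ζ L)`.
  inner_apply_eq_inner_of_decompositions (hA K) (hA (K + 1)) hlam hQdΨ hΦ hdec hdec'

/-- Proposition 3.5.  Let `(A_L)` be a family of operators with
`A_{L+1} Q = λ Q A_L` (`λ ≠ 0`).  If `Ψ ∈ W^L` (`L = K+1 ≥ 2`) is a zero-energy state,
`QΨ = 0 = Q†Ψ`, with decompositions `Ψ = Φ + Qα` (`QΦ = 0`, `α ∈ W^{L-1}`) and
`Ψ = Φ' + Q†β` (`Q†Φ' = 0`, `β ∈ W^{L+1}`), then `⟨Ψ|A_L Ψ⟩ = ⟨Φ'|A_L Φ⟩`. -/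
theorem statement6 (ζ : ℝ) (hζ : ζ ≠ 0) (lam : ℂ) (hlam : lam ≠ 0)
    (A : (L : ℕ) → (V L →ₗ[ℂ] V L))
    (hA : ∀ L : ℕ, A (L + 1) ∘ₗ Qsc ζ L = lam • (Qsc ζ L ∘ₗ A L))
    (K : ℕ) (hK : 1 ≤ K)
    (Ψ Φ Φ' : V (K + 1)) (α : V K) (β : V (K + 2))
    (hΨW : Ψ ∈ W (K + 1))
    (hQΨ : Qsc ζ (K + 1) Ψ = 0) (hQdΨ : Qadj ζ (K + 1) Ψ = 0)
    (hΦ : Qsc ζ (K + 1) Φ = 0) (hα : α ∈ W K)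
    (hdec : Ψ = Φ + Qsc ζ K α)
    (hΦ' : Qadj ζ (K + 1) Φ' = 0) (hβ : β ∈ W (K + 2))
    (hdec' : Ψ - Φ' = Qadj ζ (K + 2) β) :
    (inner ℂ Ψ (A (K + 1) Ψ) : ℂ) = inner ℂ Φ' (A (K + 1) Φ) :=
  statement6_general ζ lam hlam A hA K Ψ Φ Φ' α β hQdΨ hΦ hdec hdec'

end EightVertex
end
end

section
/- Let ζ be a nonzero real number, Q(ζ) the supercharge with parameter ζ, and n ≥ 1. Then Q(ζ) Φ_n(ζ) = 0, Q(ζ) Φ̄_n(ζ) = 0, Q(ζ)† Φ_n(ζ⁻¹) = 0 and Q(ζ)† Φ̄_n(ζ⁻¹) = 0, where Φ_n(·), Φ̄_n(·) ∈ W^{2n+1}. -/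
open scoped BigOperators

noncomputable section

namespace EightVertex

-- ===== auxiliary development =====

lemma fin2_cases (x : Fin 2) : x = 0 ∨ x = 1 := by
  rcases x with ⟨v, hv⟩
  interval_cases v
  · exact Or.inl rfl
  · exact Or.inr rfl

lemma cyc_injective {L : ℕ} : Function.Injective (cyc (L := L)) := by
  intro j k h
  have hj := j.isLt
  have hk := k.isLt
  have hval : ((j : ℕ) + 1) % L = ((k : ℕ) + 1) % L := congrArg Fin.val h
  apply Fin.ext
  have hj' : (j : ℕ) + 1 ≤ L := hj
  have hk' : (k : ℕ) + 1 ≤ L := hk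
  rcases eq_or_lt_of_le hj' with h1 | h1 <;> rcases eq_or_lt_of_le hk' with h2 | h2
  · omega
  · rw [h1, Nat.mod_self, Nat.mod_eq_of_lt h2] at hval; omega
  · rw [h2, Nat.mod_self, Nat.mod_eq_of_lt h1] at hval; omega
  · rw [Nat.mod_eq_of_lt h1, Nat.mod_eq_of_lt h2] at hval; omega

lemma cyc_bijective {L : ℕ} : Function.Bijective (cyc (L := L)) :=
  Finite.injective_iff_bijective.mp cyc_injective

lemma nDown_comp {L : ℕ} (s : Cfg L) (g : Fin L → Fin L) (hg : Function.Bijective g) :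
    nDown (fun j => s (g j)) = nDown s := by
  unfold nDown
  apply Finset.card_bij (fun a _ => g a)
  · intro a ha
    simp only [Finset.mem_filter, Finset.mem_univ, true_and] at ha ⊢
    exact ha
  · intro a _ b _ hab
    exact hg.1 hab
  · intro b hb
    obtain ⟨a, rfl⟩ := hg.2 b
    simp only [Finset.mem_filter, Finset.mem_univ, true_and] at hb ⊢
    exact ⟨a, hb, rfl⟩

/-- The coefficient function of `Phi`/`PhiBar`. -/
def phiCoef (z : ℂ) (r : ℕ) {L : ℕ} (s : Cfg L) : ℂ :=
  if nDown s % 2 = r then z ^ (nDown s / 2) else 0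

lemma phiCoef_cyc {L : ℕ} (z : ℂ) (r : ℕ) (s : Cfg L) :
    phiCoef z r (fun j => s (cyc j)) = phiCoef z r s := by
  unfold phiCoef
  rw [nDown_comp s cyc cyc_bijective]

lemma Phi_apply (ζ : ℝ) (n : ℕ) (t : Cfg (2*n+1)) :
    Phi ζ n t = phiCoef (ζ : ℂ) 1 t := by
  unfold Phi phiCoef bs
  rw [WithLp.ofLp_sum, Finset.sum_apply]
  simp only [WithLp.ofLp_smul, Pi.smul_apply, PiLp.smul_apply, EuclideanSpace.single_apply, smul_eq_mul, mul_ite, mul_one, mul_zero]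
  rw [Finset.sum_eq_single t]
  · simp
  · intro b _ hb
    simp [hb, Ne.symm hb]
  · simp

lemma PhiBar_apply (ζ : ℝ) (n : ℕ) (t : Cfg (2*n+1)) :
    PhiBar ζ n t = phiCoef (ζ : ℂ) 0 t := by
  unfold PhiBar phiCoef bs
  rw [WithLp.ofLp_sum, Finset.sum_apply]
  simp only [WithLp.ofLp_smul, Pi.smul_apply, PiLp.smul_apply, EuclideanSpace.single_apply, smul_eq_mul, mul_ite, mul_one, mul_zero]
  rw [Finset.sum_eq_single t]
  · simp
  · intro b _ hb
    simp [hb, Ne.symm hb]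
  · simp

lemma Sop_apply {M : ℕ} (v : V (M+1)) (s' : Cfg (M+1)) :
    Sop (M+1) v s' = v (fun j => s' (cyc j)) := by
  show (Smat (M+1)).mulVec v s' = _
  unfold Matrix.mulVec dotProduct Smat
  rw [Finset.sum_eq_single (fun j => s' (cyc j))]
  · simp
  · intro b _ hb
    have hne : ¬ ∀ j, s' (cyc j) = b j := fun hall => hb (funext fun j => (hall j).symm)
    simp [hne]
  · simp

lemma insIdx_val {L : ℕ} (j k : Fin L) :
    (insIdx j k : ℕ) = if (k : ℕ) < (j : ℕ) then (k : ℕ) else (k : ℕ) + 1 := by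
  unfold insIdx
  split <;> simp

lemma insIdx_self {L : ℕ} (j : Fin L) : insIdx j j = j.succ := by
  unfold insIdx
  rw [if_neg (lt_irrefl _)]

lemma insIdx_ne_castSucc {L : ℕ} (j k : Fin L) : insIdx j k ≠ j.castSucc := by
  intro h
  have := congrArg Fin.val h
  rw [insIdx_val] at this
  simp only [Fin.coe_castSucc] at this
  split at this <;> omega

lemma exists_insIdx_eq {L : ℕ} (j : Fin L) (i : Fin (L+1)) (hi : i ≠ j.castSucc) :
    ∃ k, insIdx j k = i := by
  have hiv := i.isLt
  have hjv := j.isLt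
  have hne : (i : ℕ) ≠ (j : ℕ) := by
    intro h; exact hi (Fin.ext (by simpa using h))
  by_cases h : (i : ℕ) < (j : ℕ)
  · refine ⟨⟨(i : ℕ), by omega⟩, ?_⟩
    apply Fin.ext
    rw [insIdx_val]
    simp [h]
  · refine ⟨⟨(i : ℕ) - 1, by omega⟩, ?_⟩
    apply Fin.ext
    rw [insIdx_val, if_neg (by simp; omega)]
    simp
    omega

lemma exists_insIdx_eq' {L : ℕ} (j : Fin L) (i : Fin (L+1)) (hi : i ≠ j.castSucc)
    (hi' : i ≠ j.succ) : ∃ k, k ≠ j ∧ insIdx j k = i := by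
  obtain ⟨k, hk⟩ := exists_insIdx_eq j i hi
  refine ⟨k, ?_, hk⟩
  rintro rfl
  rw [insIdx_self] at hk
  exact hi' hk.symm

lemma insIdx_injective {L : ℕ} (j : Fin L) : Function.Injective (insIdx j) := by
  intro a b h
  have := congrArg Fin.val h
  rw [insIdx_val, insIdx_val] at this
  apply Fin.ext
  split at this <;> split at this <;> omega

lemma sum_insIdx_split {L : ℕ} (j : Fin L) {M : Type*} [AddCommMonoid M]
    (g : Fin (L+1) → M) :
    ∑ i, g i = g j.castSucc + ∑ k, g (insIdx j k) := by
  rw [← Finset.add_sum_erase _ _ (Finset.mem_univ j.castSucc)]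
  congr 1
  have himg : Finset.univ.erase j.castSucc = Finset.univ.image (insIdx j) := by
    ext i
    simp only [Finset.mem_erase, Finset.mem_univ, and_true, Finset.mem_image, true_and]
    constructor
    · intro hi
      obtain ⟨k, hk⟩ := exists_insIdx_eq j i hi
      exact ⟨k, hk⟩
    · rintro ⟨k, -, rfl⟩
      exact insIdx_ne_castSucc j k
  rw [himg, Finset.sum_image (fun a _ b _ h => insIdx_injective j h)]

/-- Merge the (equal) pair at positions `j, j+1` of `s'` into a single down spin. -/
def mergeCfg {L : ℕ} (j : Fin L) (s' : Cfg (L+1)) : Cfg L :=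
  fun k => if k = j then 1 else s' (insIdx j k)

/-- Insert the pair `(a,a)` at position `j` (replacing the spin at `j`). -/
def insCfg {L : ℕ} (j : Fin L) (a : Fin 2) (s : Cfg L) : Cfg (L+1) :=
  fun i =>
    if h : (i : ℕ) < (j : ℕ) then s ⟨i, h.trans j.isLt⟩
    else if (i : ℕ) ≤ (j : ℕ) + 1 then a
    else s ⟨(i : ℕ) - 1, by have := i.isLt; omega⟩

lemma insCfg_castSucc {L : ℕ} (j : Fin L) (a : Fin 2) (s : Cfg L) :
    insCfg j a s j.castSucc = a := by
  unfold insCfg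
  rw [dif_neg (by simp), if_pos (by simp)]

lemma insCfg_succ {L : ℕ} (j : Fin L) (a : Fin 2) (s : Cfg L) :
    insCfg j a s j.succ = a := by
  unfold insCfg
  rw [dif_neg (by simp), if_pos (by simp)]

lemma insCfg_insIdx {L : ℕ} (j : Fin L) (a : Fin 2) (s : Cfg L) (k : Fin L) (hk : k ≠ j) :
    insCfg j a s (insIdx j k) = s k := by
  have hkj : (k : ℕ) ≠ (j : ℕ) := fun h => hk (Fin.ext h)
  unfold insCfg
  by_cases h : (k : ℕ) < (j : ℕ)
  · have h1 : (insIdx j k : ℕ) = (k : ℕ) := by rw [insIdx_val, if_pos h]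
    rw [dif_pos (by omega)]
    congr 1
    exact Fin.ext (by simpa using h1)
  · have h1 : (insIdx j k : ℕ) = (k : ℕ) + 1 := by rw [insIdx_val, if_neg h]
    rw [dif_neg (by omega), if_neg (by omega)]
    congr 1
    apply Fin.ext
    simp [h1]

lemma nDown_eq_sum {L : ℕ} (s : Cfg L) : nDown s = ∑ k, if s k = 1 then 1 else 0 := by
  unfold nDown
  rw [Finset.card_filter]

lemma nDown_mergeCfg {L : ℕ} (j : Fin L) (s' : Cfg (L+1)) :
    nDown (mergeCfg j s') + (if s' j.castSucc = 1 then 1 else 0)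
      + (if s' j.succ = 1 then 1 else 0) = nDown s' + 1 := by
  rw [nDown_eq_sum, nDown_eq_sum, sum_insIdx_split j (fun i => if s' i = 1 then 1 else 0)]
  rw [← Finset.add_sum_erase _ (fun k => if mergeCfg j s' k = 1 then 1 else 0) (Finset.mem_univ j),
    ← Finset.add_sum_erase _ (fun k => if s' (insIdx j k) = 1 then 1 else 0) (Finset.mem_univ j)]
  have h1 : mergeCfg j s' j = 1 := by simp [mergeCfg]
  have h2 : ∀ k ∈ Finset.univ.erase j,
      (if mergeCfg j s' k = 1 then (1:ℕ) else 0) = (if s' (insIdx j k) = 1 then 1 else 0) := by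
    intro k hk
    have hkj : k ≠ j := (Finset.mem_erase.mp hk).1
    simp [mergeCfg, hkj]
  rw [Finset.sum_congr rfl h2, h1, insIdx_self, if_pos rfl]
  omega

lemma nDown_insCfg {L : ℕ} (j : Fin L) (a : Fin 2) (s : Cfg L) :
    nDown (insCfg j a s) + (if s j = 1 then 1 else 0)
      = nDown s + 2 * (if a = 1 then 1 else 0) := by
  rw [nDown_eq_sum, nDown_eq_sum, sum_insIdx_split j (fun i => if insCfg j a s i = 1 then 1 else 0)]
  rw [← Finset.add_sum_erase _ (fun k => if s k = 1 then 1 else 0) (Finset.mem_univ j),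
    ← Finset.add_sum_erase _ (fun k => if insCfg j a s (insIdx j k) = 1 then 1 else 0)
      (Finset.mem_univ j)]
  have h2 : ∀ k ∈ Finset.univ.erase j,
      (if insCfg j a s (insIdx j k) = 1 then (1:ℕ) else 0) = (if s k = 1 then 1 else 0) := by
    intro k hk
    rw [insCfg_insIdx j a s k (Finset.mem_erase.mp hk).1]
  rw [Finset.sum_congr rfl h2, insIdx_self, insCfg_succ, insCfg_castSucc]
  omega

lemma qloc_zero (z : ℂ) (a b : Fin 2) : qloc z 0 a b = 0 := by
  unfold qloc
  norm_num

lemma qloc_up (z : ℂ) : qloc z 1 0 0 = 1 := by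
  unfold qloc
  norm_num

lemma qloc_down (z : ℂ) : qloc z 1 1 1 = -z := by
  unfold qloc
  norm_num

lemma qloc_ne (z : ℂ) (c a b : Fin 2) (h : a ≠ b) : qloc z c a b = 0 := by
  unfold qloc
  rcases fin2_cases a with rfl | rfl <;> rcases fin2_cases b with rfl | rfl <;> simp_all

lemma col_sum (z : ℂ) {L : ℕ} (j : Fin L) (s' : Cfg (L+1)) (φ : Cfg L → ℂ) :
    ∑ s : Cfg L, qjMat z j s' s * φ s
      = qloc z 1 (s' j.castSucc) (s' j.succ) * φ (mergeCfg j s') := by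
  rw [Finset.sum_eq_single (mergeCfg j s')]
  · have h1 : mergeCfg j s' j = 1 := by simp [mergeCfg]
    have h2 : ∀ k ∈ Finset.univ.erase j,
        (if s' (insIdx j k) = mergeCfg j s' k then (1:ℂ) else 0) = 1 := by
      intro k hk
      rw [if_pos]
      simp [mergeCfg, (Finset.mem_erase.mp hk).1]
    unfold qjMat
    rw [h1, Finset.prod_congr rfl h2, Finset.prod_const_one, mul_one]
  · intro b _ hb
    obtain ⟨i, hi⟩ := Function.ne_iff.mp hb
    by_cases hij : i = j
    · have hm : mergeCfg j s' i = 1 := by simp [mergeCfg, hij]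
      have hb0 : b j = 0 := by
        rcases fin2_cases (b i) with h | h
        · rw [← hij]; exact h
        · exact absurd (h.trans hm.symm) hi
      unfold qjMat
      rw [hb0, qloc_zero, zero_mul, zero_mul]
    · have hfac : (if s' (insIdx j i) = b i then (1:ℂ) else 0) = 0 := by
        rw [if_neg]
        intro h
        exact hi (by rw [← h]; simp [mergeCfg, hij])
      unfold qjMat
      rw [Finset.prod_eq_zero (Finset.mem_erase.mpr ⟨hij, Finset.mem_univ i⟩) hfac,
        mul_zero, zero_mul]
  · simp

lemma row_sum (z : ℂ) {L : ℕ} (j : Fin L) (s : Cfg L) (φ : Cfg (L+1) → ℂ) :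
    ∑ s' : Cfg (L+1), qjMat z j s' s * φ s'
      = if s j = 1 then φ (insCfg j 0 s) + (-z) * φ (insCfg j 1 s) else 0 := by
  by_cases hj : s j = 1
  · rw [if_pos hj]
    have hne : insCfg j 0 s ≠ insCfg j 1 s := by
      intro h
      have := congrFun h j.castSucc
      rw [insCfg_castSucc, insCfg_castSucc] at this
      exact absurd this (by decide)
    have hprod : ∀ (a : Fin 2), ∏ k ∈ Finset.univ.erase j,
        (if insCfg j a s (insIdx j k) = s k then (1:ℂ) else 0) = 1 := by
      intro a
      apply Finset.prod_eq_one
      intro k hk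
      rw [insCfg_insIdx j a s k (Finset.mem_erase.mp hk).1, if_pos rfl]
    have hvan : ∀ s' ∈ (Finset.univ : Finset (Cfg (L+1))),
        s' ∉ ({insCfg j 0 s, insCfg j 1 s} : Finset (Cfg (L+1))) →
        qjMat z j s' s * φ s' = 0 := by
      intro s' _ hs'
      simp only [Finset.mem_insert, Finset.mem_singleton, not_or] at hs'
      by_cases hab : s' j.castSucc = s' j.succ
      · have hsne : s' ≠ insCfg j (s' j.castSucc) s := by
          rcases fin2_cases (s' j.castSucc) with h | h <;> rw [h] <;>
            [exact (h ▸ hs'.1); exact (h ▸ hs'.2)]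
        obtain ⟨i, hi⟩ := Function.ne_iff.mp hsne
        have hic : i ≠ j.castSucc := by
          rintro rfl; exact hi (insCfg_castSucc j _ s).symm
        have his : i ≠ j.succ := by
          rintro rfl
          exact hi ((insCfg_succ j _ s).symm ▸ (hab ▸ rfl))
        obtain ⟨k, hkj, hki⟩ := exists_insIdx_eq' j i hic his
        have hfac : (if s' (insIdx j k) = s k then (1:ℂ) else 0) = 0 := by
          rw [hki, if_neg]
          intro h
          refine hi (h.trans ?_)
          rw [← hki]
          exact (insCfg_insIdx j _ s k hkj).symm
        unfold qjMat
        rw [Finset.prod_eq_zero (Finset.mem_erase.mpr ⟨hkj, Finset.mem_univ k⟩) hfac,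
          mul_zero, zero_mul]
      · unfold qjMat
        rw [qloc_ne z _ _ _ hab, zero_mul, zero_mul]
    rw [← Finset.sum_subset (Finset.subset_univ _) hvan, Finset.sum_pair hne]
    unfold qjMat
    rw [hj, hprod 0, hprod 1, insCfg_castSucc, insCfg_succ, insCfg_castSucc, insCfg_succ,
      qloc_up, qloc_down]
    ring
  · rw [if_neg hj]
    apply Finset.sum_eq_zero
    intro s' _
    have h0 : s j = 0 := by rcases fin2_cases (s j) with h | h; exact h; exact absurd h hj
    unfold qjMat
    rw [h0, qloc_zero, zero_mul, zero_mul]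

lemma Smat_mul_apply {N : ℕ} {β : Type*} [Fintype β] [DecidableEq β]
    (Q : Matrix (Cfg (N+1)) β ℂ) (s' : Cfg (N+1)) (s : β) :
    (Smat (N+1) * Q) s' s = Q (fun j => s' (cyc j)) s := by
  rw [Matrix.mul_apply]
  rw [Finset.sum_eq_single (fun j => s' (cyc j))]
  · rw [show Smat (N+1) s' (fun j => s' (cyc j)) = 1 from if_pos (fun j => rfl), one_mul]
  · intro b _ hb
    have hne : ¬ ∀ j, s' (cyc j) = b j := fun hall => hb (funext fun j => (hall j).symm)
    rw [show Smat (N+1) s' b = 0 from if_neg hne, zero_mul]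
  · simp

/-- `+1` for an up-up pair, `-1` for a down-down pair, `0` otherwise. -/
def epsPair (a b : Fin 2) : ℂ := if a = b then (if a = 0 then 1 else -1) else 0

lemma slot_eval (z : ℂ) (r : ℕ) {L : ℕ} (j : Fin L) (s'' : Cfg (L+1)) :
    qloc z 1 (s'' j.castSucc) (s'' j.succ) * phiCoef z r (mergeCfg j s'')
      = epsPair (s'' j.castSucc) (s'' j.succ)
        * (if (nDown s'' + 1) % 2 = r then z ^ ((nDown s'' + 1) / 2) else 0) := by
  have hnd := nDown_mergeCfg j s''
  rcases fin2_cases (s'' j.castSucc) with ha | ha <;>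
    rcases fin2_cases (s'' j.succ) with hb | hb
  · rw [ha, hb, qloc_up, epsPair, if_pos rfl, if_pos rfl, one_mul, one_mul]
    rw [ha, hb] at hnd
    have hm : nDown (mergeCfg j s'') = nDown s'' + 1 := by simpa using hnd
    rw [phiCoef, hm]
  · rw [ha, hb, qloc_ne z 1 0 1 (by decide), epsPair, if_neg (by decide), zero_mul, zero_mul]
  · rw [ha, hb, qloc_ne z 1 1 0 (by decide), epsPair, if_neg (by decide), zero_mul, zero_mul]
  · rw [ha, hb, qloc_down, epsPair, if_pos rfl, if_neg (by decide)]
    rw [ha, hb] at hnd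
    have hm : nDown (mergeCfg j s'') + 1 = nDown s'' := by simpa using hnd
    rw [phiCoef]
    have h1 : (nDown s'' + 1) % 2 = nDown (mergeCfg j s'') % 2 := by omega
    have h2 : (nDown s'' + 1) / 2 = nDown (mergeCfg j s'') / 2 + 1 := by omega
    rw [h1, h2]
    by_cases hr : nDown (mergeCfg j s'') % 2 = r
    · rw [if_pos hr, if_pos hr, pow_succ]
      ring
    · rw [if_neg hr, if_neg hr]
      ring

lemma ins_cancel (z : ℂ) (hz : z ≠ 0) (r : ℕ) {L : ℕ} (j : Fin L) (s : Cfg L)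
    (h : s j = 1) :
    phiCoef z⁻¹ r (insCfg j 0 s) + (-z) * phiCoef z⁻¹ r (insCfg j 1 s) = 0 := by
  have h0 := nDown_insCfg j 0 s
  have h1 := nDown_insCfg j 1 s
  rw [h, if_pos rfl] at h0 h1
  simp only [if_neg (by decide : ¬ (0 : Fin 2) = 1), if_pos rfl, mul_zero, mul_one] at h0 h1
  have hd : 1 ≤ nDown s := by
    have : j ∈ Finset.univ.filter (fun k => s k = 1) := by
      simp [h]
    have := Finset.card_pos.mpr ⟨j, this⟩
    unfold nDown
    omega
  set d0 := nDown (insCfg j 0 s) with hd0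
  have hd1 : nDown (insCfg j 1 s) = d0 + 2 := by omega
  rw [phiCoef, phiCoef, hd1]
  have e1 : (d0 + 2) % 2 = d0 % 2 := by omega
  have e2 : (d0 + 2) / 2 = d0 / 2 + 1 := by omega
  rw [e1, e2]
  by_cases hr : d0 % 2 = r
  · rw [if_pos hr, if_pos hr, pow_succ]
    field_simp
    rw [← hd0]
    ring
  · rw [if_neg hr, if_neg hr]
    ring

/-- indicator: `1` for spin up, `-1` for spin down. -/
def ind (x : Fin 2) : ℂ := if x = 0 then 1 else -1

lemma eps_eq (i : ℕ) (x y : Fin 2) :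
    (-1 : ℂ)^(i+1) * epsPair x y = ((-1 : ℂ)^(i+1) * ind y - (-1 : ℂ)^i * ind x)/2 := by
  rcases fin2_cases x with rfl | rfl <;> rcases fin2_cases y with rfl | rfl <;>
    simp [epsPair, ind, pow_succ] <;> ring

lemma bracket_zero (m : ℕ) (u : Cfg (2*m+2)) :
    epsPair (u ⟨2*m+1, by omega⟩) (u ⟨0, by omega⟩)
      + ∑ j : Fin (2*m+1), (-1 : ℂ)^((j:ℕ)+1) * epsPair (u j.castSucc) (u j.succ) = 0 := by
  have hNpos : 0 < 2*m+2 := by omega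
  set A : ℕ → ℂ := fun i => (-1 : ℂ)^i * ind (u ⟨i % (2*m+2), Nat.mod_lt _ hNpos⟩) with hA
  have hstep : ∀ i : ℕ, (-1 : ℂ)^(i+1) * epsPair (u ⟨i % (2*m+2), Nat.mod_lt _ hNpos⟩)
      (u ⟨(i+1) % (2*m+2), Nat.mod_lt _ hNpos⟩) = (A (i+1) - A i)/2 :=
    fun i => eps_eq _ _ _
  have hc1 : ∀ (i : ℕ) (h : i < 2*m+2),
      (⟨i % (2*m+2), Nat.mod_lt _ hNpos⟩ : Fin (2*m+2)) = ⟨i, h⟩ :=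
    fun i h => Fin.ext (Nat.mod_eq_of_lt h)
  have hsum : ∑ j : Fin (2*m+1), (-1 : ℂ)^((j:ℕ)+1) * epsPair (u j.castSucc) (u j.succ)
      = (A (2*m+1) - A 0)/2 := by
    have hcast : ∀ j : Fin (2*m+1), (-1 : ℂ)^((j:ℕ)+1) * epsPair (u j.castSucc) (u j.succ)
        = (A ((j:ℕ)+1) - A (j:ℕ))/2 := by
      intro j
      have hj := j.isLt
      rw [← hstep (j : ℕ), hc1 (j:ℕ) (by omega), hc1 ((j:ℕ)+1) (by omega)]
      congr 2 <;> exact congrArg u (Fin.ext (by simp))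
    rw [Finset.sum_congr rfl (fun j _ => hcast j)]
    rw [Fin.sum_univ_eq_sum_range (fun i => (A (i+1) - A i)/2) (2*m+1)]
    rw [← Finset.sum_div, Finset.sum_range_sub A (2*m+1)]
  have hcyc : epsPair (u ⟨2*m+1, by omega⟩) (u ⟨0, by omega⟩)
      = (A (2*m+2) - A (2*m+1))/2 := by
    have h1 : (-1 : ℂ)^(2*m+1+1) = 1 := by
      rw [show 2*m+1+1 = 2*(m+1) by ring, pow_mul]
      norm_num
    have h2 := hstep (2*m+1)
    rw [h1, one_mul, hc1 (2*m+1) (by omega)] at h2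
    rw [← h2]
    congr 1
    exact congrArg u (Fin.ext (by simp [Nat.mod_self]))
  rw [hsum, hcyc]
  have hA0 : A (2*m+2) = A 0 := by
    rw [hA]
    simp only
    have h1 : (-1 : ℂ)^(2*m+2) = (-1 : ℂ)^0 := by
      rw [show 2*m+2 = 2*(m+1) by ring, pow_mul]
      norm_num
    rw [h1]
    congr 2
    exact Fin.ext (by simp [Nat.mod_self])
  rw [hA0]
  ring

lemma col_zero (z : ℂ) (r : ℕ) (m : ℕ) (s' : Cfg (2*m+2)) :
    ∑ s : Cfg (2*m+1), QsumMat z (2*m+1) s' s * phiCoef z r s = 0 := by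
  have hQ : QsumMat z (2*m+1)
      = Smat (2*m+2) * qjMat z (Fin.last (2*m))
        + ∑ j : Fin (2*m+1), ((-1 : ℂ) ^ ((j : ℕ) + 1)) • qjMat z j := rfl
  have hsplit : ∀ s : Cfg (2*m+1), QsumMat z (2*m+1) s' s * phiCoef z r s
      = qjMat z (Fin.last (2*m)) (fun i => s' (cyc i)) s * phiCoef z r s
        + ∑ j : Fin (2*m+1),
            ((-1 : ℂ) ^ ((j : ℕ) + 1)) * (qjMat z j s' s * phiCoef z r s) := by
    intro s
    rw [hQ, Matrix.add_apply, Smat_mul_apply, add_mul, Matrix.sum_apply, Finset.sum_mul]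
    congr 1
    refine Finset.sum_congr rfl fun j _ => ?_
    rw [Matrix.smul_apply, smul_eq_mul, mul_assoc]
  rw [Finset.sum_congr rfl fun s _ => hsplit s, Finset.sum_add_distrib]
  set C : ℂ := if (nDown s' + 1) % 2 = r then z ^ ((nDown s' + 1) / 2) else 0 with hC
  have hterm1 : ∑ s : Cfg (2*m+1), qjMat z (Fin.last (2*m)) (fun i => s' (cyc i)) s
      * phiCoef z r s = epsPair (s' ⟨2*m+1, by omega⟩) (s' ⟨0, by omega⟩) * C := by
    rw [col_sum z (Fin.last (2*m)) (fun i => s' (cyc i)) (phiCoef z r),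
      slot_eval z r (Fin.last (2*m)) (fun i => s' (cyc i))]
    rw [show nDown (fun i => s' (cyc i)) = nDown s' from nDown_comp s' cyc cyc_bijective]
    congr 2
    · exact congrArg s' (Fin.ext (by
        show ((2*m : ℕ) + 1) % (2*m+2) = 2*m+1
        exact Nat.mod_eq_of_lt (by omega)))
    · exact congrArg s' (Fin.ext (by
        show ((2*m+1 : ℕ) + 1) % (2*m+2) = 0
        simp [Nat.mod_self]))
  have hterm2 : ∀ j : Fin (2*m+1),
      ∑ s : Cfg (2*m+1), ((-1 : ℂ) ^ ((j : ℕ) + 1)) * (qjMat z j s' s * phiCoef z r s)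
      = ((-1 : ℂ) ^ ((j : ℕ) + 1) * epsPair (s' j.castSucc) (s' j.succ)) * C := by
    intro j
    rw [← Finset.mul_sum, col_sum z j s' (phiCoef z r), slot_eval z r j s']
    ring
  rw [hterm1, Finset.sum_comm, Finset.sum_congr rfl fun j _ => hterm2 j, ← Finset.sum_mul,
    ← add_mul]
  exact mul_eq_zero_of_left (bracket_zero m s') C

lemma row_zero (z : ℂ) (hz : z ≠ 0) (r : ℕ) (m : ℕ) (s : Cfg (2*m+2)) :
    ∑ s' : Cfg (2*m+3), QsumMat z (2*m+2) s' s * phiCoef z⁻¹ r s' = 0 := by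
  have hQ : QsumMat z (2*m+2)
      = Smat (2*m+3) * qjMat z (Fin.last (2*m+1))
        + ∑ j : Fin (2*m+2), ((-1 : ℂ) ^ ((j : ℕ) + 1)) • qjMat z j := rfl
  have hsplit : ∀ s' : Cfg (2*m+3), QsumMat z (2*m+2) s' s * phiCoef z⁻¹ r s'
      = qjMat z (Fin.last (2*m+1)) (fun i => s' (cyc i)) s * phiCoef z⁻¹ r s'
        + ∑ j : Fin (2*m+2),
            ((-1 : ℂ) ^ ((j : ℕ) + 1)) * (qjMat z j s' s * phiCoef z⁻¹ r s') := by
    intro s'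
    rw [hQ, Matrix.add_apply, Smat_mul_apply, add_mul, Matrix.sum_apply, Finset.sum_mul]
    congr 1
    refine Finset.sum_congr rfl fun j _ => ?_
    rw [Matrix.smul_apply, smul_eq_mul, mul_assoc]
  rw [Finset.sum_congr rfl fun s' _ => hsplit s', Finset.sum_add_distrib]
  have hrow : ∀ (j : Fin (2*m+2)),
      ∑ s' : Cfg (2*m+3), qjMat z j s' s * phiCoef z⁻¹ r s' = 0 := by
    intro j
    rw [row_sum z j s (phiCoef z⁻¹ r)]
    by_cases hj : s j = 1
    · rw [if_pos hj]
      exact ins_cancel z hz r j s hj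
    · rw [if_neg hj]
  have hterm1 : ∑ s' : Cfg (2*m+3), qjMat z (Fin.last (2*m+1)) (fun i => s' (cyc i)) s
      * phiCoef z⁻¹ r s' = 0 := by
    have hinv : ∀ s' : Cfg (2*m+3), phiCoef z⁻¹ r s' = phiCoef z⁻¹ r (fun i => s' (cyc i)) :=
      fun s' => (phiCoef_cyc z⁻¹ r s').symm
    rw [Finset.sum_congr rfl fun s' _ => by rw [hinv s']]
    have he : ∀ f : Cfg (2*m+3),
        (Equiv.arrowCongr (Equiv.ofBijective cyc cyc_bijective).symm (Equiv.refl (Fin 2))) f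
          = fun i => f (cyc i) := fun f => rfl
    have hre := Equiv.sum_comp
      (Equiv.arrowCongr (Equiv.ofBijective cyc cyc_bijective).symm (Equiv.refl (Fin 2)))
      (fun t : Cfg (2*m+3) => qjMat z (Fin.last (2*m+1)) t s * phiCoef z⁻¹ r t)
    rw [Finset.sum_congr rfl (fun s' _ => by rw [← he s']), hre]
    exact hrow (Fin.last (2*m+1))
  rw [hterm1, Finset.sum_comm, zero_add]
  apply Finset.sum_eq_zero
  intro j _
  rw [← Finset.mul_sum, hrow j, mul_zero]

lemma qloc_star (ζ : ℝ) (a b c : Fin 2) : star (qloc (ζ:ℂ) a b c) = qloc (ζ:ℂ) a b c := by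
  unfold qloc
  split_ifs <;> simp

lemma qjMat_star (ζ : ℝ) {L : ℕ} (j : Fin L) (s' : Cfg (L+1)) (s : Cfg L) :
    star (qjMat (ζ:ℂ) j s' s) = qjMat (ζ:ℂ) j s' s := by
  unfold qjMat
  rw [star_mul', qloc_star, star_prod]
  congr 1
  refine Finset.prod_congr rfl fun k _ => ?_
  split_ifs <;> simp

lemma QsumMat_star (ζ : ℝ) (M : ℕ) (s' : Cfg (M+2)) (s : Cfg (M+1)) :
    star (QsumMat (ζ:ℂ) (M+1) s' s) = QsumMat (ζ:ℂ) (M+1) s' s := by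
  have hQ : QsumMat (ζ:ℂ) (M+1) s' s
      = qjMat (ζ:ℂ) (Fin.last M) (fun i => s' (cyc i)) s
        + ∑ j : Fin (M+1), ((-1 : ℂ) ^ ((j : ℕ) + 1)) * qjMat (ζ:ℂ) j s' s := by
    show (Smat (M+2) * qjMat (ζ:ℂ) (Fin.last M)
        + ∑ j : Fin (M+1), ((-1 : ℂ) ^ ((j : ℕ) + 1)) • qjMat (ζ:ℂ) j) s' s = _
    rw [Matrix.add_apply, Smat_mul_apply, Matrix.sum_apply]
    congr 1
  rw [hQ, star_add, qjMat_star, star_sum]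
  congr 1
  refine Finset.sum_congr rfl fun j _ => ?_
  rw [star_mul', qjMat_star]
  congr 1
  rw [star_pow, star_neg, star_one]

lemma Phi_mem (ζ : ℝ) (n : ℕ) : Phi ζ n ∈ W (2*n+1) := by
  rw [W, Module.End.mem_eigenspace_iff]
  have hpow : ((-1 : ℂ)) ^ (2*n+1+1) = 1 := by
    rw [show 2*n+1+1 = 2*(n+1) by ring, pow_mul]
    norm_num
  rw [hpow, one_smul]
  ext s'
  rw [Sop_apply (M := 2*n) (Phi ζ n) s', Phi_apply, Phi_apply, phiCoef_cyc]

lemma PhiBar_mem (ζ : ℝ) (n : ℕ) : PhiBar ζ n ∈ W (2*n+1) := by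
  rw [W, Module.End.mem_eigenspace_iff]
  have hpow : ((-1 : ℂ)) ^ (2*n+1+1) = 1 := by
    rw [show 2*n+1+1 = 2*(n+1) by ring, pow_mul]
    norm_num
  rw [hpow, one_smul]
  ext s'
  rw [Sop_apply (M := 2*n) (PhiBar ζ n) s', PhiBar_apply, PhiBar_apply, phiCoef_cyc]

lemma proj_self_W {L : ℕ} (v : V L) (hv : v ∈ W L) :
    (W L).subtype ((W L).orthogonalProjectionOnto.toLinearMap v) = v :=
  Submodule.starProjection_eq_self_iff.mpr hv

set_option synthInstance.maxHeartbeats 1000000 in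
lemma Qsc_apply_zero (ζ : ℝ) (n : ℕ) (v : V (2*n+1)) (hv : v ∈ W (2*n+1))
    (r : ℕ) (hvc : ∀ s, v s = phiCoef (ζ:ℂ) r s) : Qsc ζ (2*n+1) v = 0 := by
  unfold Qsc
  rw [LinearMap.smul_apply, LinearMap.comp_apply, LinearMap.comp_apply]
  have hproj := proj_self_W v hv
  rw [hproj]
  have hmul : Matrix.toEuclideanLin (QsumMat (ζ:ℂ) (2*n+1)) v = 0 := by
    ext s'
    show ∑ s, QsumMat (ζ:ℂ) (2*n+1) s' s * v s = 0
    rw [Finset.sum_congr rfl fun s _ => by rw [hvc s]]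
    exact col_zero (ζ:ℂ) r n s'
  rw [hmul, smul_zero]

set_option synthInstance.maxHeartbeats 1000000 in
set_option maxHeartbeats 1000000 in
lemma Qadj_apply_zero (ζ : ℝ) (hζ : ζ ≠ 0) (p : ℕ) (v : V (2*p+3))
    (r : ℕ) (hvc : ∀ s, v s = phiCoef ((ζ:ℂ))⁻¹ r s) : Qadj ζ (2*p+3) v = 0 := by
  show LinearMap.adjoint (Qsc ζ (2*p+2)) v = 0
  have hT : LinearMap.adjoint (Matrix.toEuclideanLin (QsumMat (ζ:ℂ) (2*p+2))) v = 0 := by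
    rw [← Matrix.toEuclideanLin_conjTranspose_eq_adjoint]
    ext s
    show ∑ s', Matrix.conjTranspose (QsumMat (ζ:ℂ) (2*p+2)) s s' * v s' = 0
    have hterm : ∀ s' : Cfg (2*p+3), Matrix.conjTranspose (QsumMat (ζ:ℂ) (2*p+2)) s s' * v s'
        = QsumMat (ζ:ℂ) (2*p+2) s' s * phiCoef ((ζ:ℂ))⁻¹ r s' := by
      intro s'
      rw [Matrix.conjTranspose_apply, QsumMat_star ζ (2*p+1) s' s, hvc s']
    rw [Finset.sum_congr rfl fun s' _ => hterm s']
    exact row_zero (ζ:ℂ) (Complex.ofReal_ne_zero.mpr hζ) r p s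
  rw [← inner_self_eq_zero (𝕜 := ℂ)]
  rw [LinearMap.adjoint_inner_left]
  unfold Qsc
  rw [LinearMap.smul_apply, LinearMap.comp_apply, LinearMap.comp_apply]
  rw [inner_smul_right]
  rw [← LinearMap.adjoint_inner_left (Matrix.toEuclideanLin (QsumMat (ζ:ℂ) (2*p+2)))]
  rw [hT, inner_zero_left, mul_zero]

/-- equation (2.36).  For nonzero `ζ` and `n ≥ 1` the states
`Φ_n(ζ), Φ̄_n(ζ), Φ_n(ζ⁻¹), Φ̄_n(ζ⁻¹)` are alternate-cyclic and satisfy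
`Q(ζ)Φ_n(ζ) = 0`, `Q(ζ)Φ̄_n(ζ) = 0`, `Q(ζ)†Φ_n(ζ⁻¹) = 0`, `Q(ζ)†Φ̄_n(ζ⁻¹) = 0`. -/
theorem statement16 (ζ : ℝ) (hζ : ζ ≠ 0) (n : ℕ) (hn : 1 ≤ n) :
    Phi ζ n ∈ W (2 * n + 1) ∧ PhiBar ζ n ∈ W (2 * n + 1) ∧
    Phi ζ⁻¹ n ∈ W (2 * n + 1) ∧ PhiBar ζ⁻¹ n ∈ W (2 * n + 1) ∧
    Qsc ζ (2 * n + 1) (Phi ζ n) = 0 ∧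
    Qsc ζ (2 * n + 1) (PhiBar ζ n) = 0 ∧
    Qadj ζ (2 * n + 1) (Phi ζ⁻¹ n) = 0 ∧
    Qadj ζ (2 * n + 1) (PhiBar ζ⁻¹ n) = 0 := by
  obtain ⟨p, rfl⟩ : ∃ p, n = p + 1 := ⟨n - 1, by omega⟩
  have hinv : ((ζ⁻¹ : ℝ) : ℂ) = ((ζ : ℂ))⁻¹ := Complex.ofReal_inv ζ
  refine ⟨Phi_mem ζ _, PhiBar_mem ζ _, Phi_mem ζ⁻¹ _, PhiBar_mem ζ⁻¹ _,
    Qsc_apply_zero ζ (p+1) _ (Phi_mem ζ _) 1 (fun s => Phi_apply ζ _ s),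
    Qsc_apply_zero ζ (p+1) _ (PhiBar_mem ζ _) 0 (fun s => PhiBar_apply ζ _ s),
    Qadj_apply_zero ζ hζ p (Phi ζ⁻¹ (p+1)) 1
      (fun s => by rw [Phi_apply ζ⁻¹ (p+1) s, hinv]),
    Qadj_apply_zero ζ hζ p (PhiBar ζ⁻¹ (p+1)) 0
      (fun s => by rw [PhiBar_apply ζ⁻¹ (p+1) s, hinv])⟩

end EightVertex
end
end
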